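/- arXiv:2007.12338 — 2 statements merged into one kernel-verified Lean document; each statement's English description precedes it below -/
import Mathlib

section
/- Let α > 0, θ₁,…,θₙ > 0, and let Λ = (Λᵢⱼ) be any n×n matrix with positive entries. Then the quantile mixture Λ⊗𝐏_{α,𝛉} equals 𝐏_{α,Λ𝛉}; that is, for each i, the law of ∑ⱼ Λᵢⱼ P_{α,θⱼ}⁻¹(U) (U uniform on (0,1)) is the Pareto distribution P_{α,(Λ𝛉)ᵢ} with scale (Λ𝛉)ᵢ = ∑ⱼ Λᵢⱼθⱼ. -/
open MeasureTheory
open scoped ENNReal BigOperators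

noncomputable section

/-- The `f`-aggregation set: laws of `f (X₁,…,Xₙ)` over all couplings with marginals `F`. -/
def aggSetF (n : ℕ) (f : (Fin n → ℝ) → ℝ) (F : Fin n → Measure ℝ) : Set (Measure ℝ) :=
  {H | ∃ μ : Measure (Fin n → ℝ), IsProbabilityMeasure μ ∧
    (∀ i, μ.map (fun x => x i) = F i) ∧ H = μ.map f}

/-- The aggregation set for sums. -/
def aggSet (n : ℕ) (F : Fin n → Measure ℝ) : Set (Measure ℝ) :=
  aggSetF n (fun x => ∑ i, x i) F

/-- A symmetric function on `ℝⁿ`. -/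
def IsSymmetricFn (n : ℕ) (f : (Fin n → ℝ) → ℝ) : Prop :=
  ∀ (π : Equiv.Perm (Fin n)) (x : Fin n → ℝ), f (x ∘ π) = f x

/-- Left-continuous quantile function of a measure on ℝ. -/
def quantile (F : Measure ℝ) (p : ℝ) : ℝ :=
  sInf {x : ℝ | p ≤ (F (Set.Iic x)).toReal}

/-- The uniform probability measure on (0,1). -/
def uniform01 : Measure ℝ := volume.restrict (Set.Ioo (0 : ℝ) 1)

/-- Comonotonic sum F₁ ⊕ ⋯ ⊕ Fₙ : the law of ∑ Fᵢ⁻¹(U), U uniform on (0,1). -/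
def comonoSum (n : ℕ) (F : Fin n → Measure ℝ) : Measure ℝ :=
  uniform01.map (fun u => ∑ i, quantile (F i) u)

/-- Convex order F ≺cx G. -/
def ConvexOrder (F G : Measure ℝ) : Prop :=
  ∀ φ : ℝ → ℝ, ConvexOn ℝ Set.univ φ → Integrable φ F → Integrable φ G →
    ∫ x, φ x ∂F ≤ ∫ x, φ x ∂G

/-- Stochastic order F ≺st G, i.e. F((-∞,x]) ≥ G((-∞,x]) for all x. -/
def StOrder (F G : Measure ℝ) : Prop :=
  ∀ x : ℝ, G (Set.Iic x) ≤ F (Set.Iic x)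

/-- Doubly stochastic matrix. -/
def DoublyStochastic {n : ℕ} (Λ : Matrix (Fin n) (Fin n) ℝ) : Prop :=
  (∀ i j, 0 ≤ Λ i j) ∧ (∀ i, ∑ j, Λ i j = 1) ∧ (∀ j, ∑ i, Λ i j = 1)

/-- Distribution mixture Λ𝐅 : i-th component is ∑ⱼ Λᵢⱼ Fⱼ. -/
def distMix {n : ℕ} (Λ : Matrix (Fin n) (Fin n) ℝ) (F : Fin n → Measure ℝ) :
    Fin n → Measure ℝ :=
  fun i => ∑ j, ENNReal.ofReal (Λ i j) • F j

/-- Quantile mixture Λ⊗𝐅 : i-th component is the law of ∑ⱼ Λᵢⱼ Fⱼ⁻¹(U). -/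
def quantileMix {n : ℕ} (Λ : Matrix (Fin n) (Fin n) ℝ) (F : Fin n → Measure ℝ) :
    Fin n → Measure ℝ :=
  fun i => uniform01.map (fun u => ∑ j, Λ i j * quantile (F j) u)

/-- Worst-case value of a risk measure over the aggregation set, valued in EReal. -/
def worstCase (ρ : Measure ℝ → ℝ) (n : ℕ) (F : Fin n → Measure ℝ) : EReal :=
  sSup ((fun H => ((ρ H : ℝ) : EReal)) '' aggSet n F)

/-- Worst-case Value-at-Risk over the aggregation set, valued in EReal. -/
def worstVaR (p : ℝ) (n : ℕ) (F : Fin n → Measure ℝ) : EReal :=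
  sSup ((fun G => ((quantile G p : ℝ) : EReal)) '' aggSet n F)

/-- The class M_D of distributions with a nonincreasing density on an interval support. -/
def MemMD (F : Measure ℝ) : Prop :=
  ∃ f : ℝ → ℝ, Measurable f ∧ (∀ x, 0 ≤ f x) ∧
    F = volume.withDensity (fun x => ENNReal.ofReal (f x)) ∧
    ∃ s : Set ℝ, s.OrdConnected ∧ (∀ x, x ∉ s → f x = 0) ∧
      (∀ x ∈ s, ∀ y ∈ s, x ≤ y → f y ≤ f x)

/-- The class M_I of distributions with a nondecreasing density on an interval support. -/
def MemMI (F : Measure ℝ) : Prop :=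
  ∃ f : ℝ → ℝ, Measurable f ∧ (∀ x, 0 ≤ f x) ∧
    F = volume.withDensity (fun x => ENNReal.ofReal (f x)) ∧
    ∃ s : Set ℝ, s.OrdConnected ∧ (∀ x, x ∉ s → f x = 0) ∧
      (∀ x ∈ s, ∀ y ∈ s, x ≤ y → f x ≤ f y)

/-- Pareto(α, θ) distribution, via its Lebesgue density α θ^α x^{-(α+1)} on [θ, ∞). -/
def pareto (α θ : ℝ) : Measure ℝ :=
  volume.withDensity
    (fun x => if θ ≤ x then ENNReal.ofReal (α * θ ^ α / x ^ (α + 1)) else 0)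

/-- A monotone risk measure (w.r.t. stochastic order, on probability measures). -/
def MonotoneRisk (ρ : Measure ℝ → ℝ) : Prop :=
  ∀ F G : Measure ℝ, IsProbabilityMeasure F → IsProbabilityMeasure G →
    StOrder F G → ρ F ≤ ρ G

/-- A risk measure consistent with convex order (on finite-mean probability measures). -/
def CxConsistentRisk (ρ : Measure ℝ → ℝ) : Prop :=
  ∀ F G : Measure ℝ, IsProbabilityMeasure F → IsProbabilityMeasure G →
    Integrable id F → Integrable id G → ConvexOrder F G → ρ F ≤ ρ G

/-- Uniform distribution on [a,b]. -/
def unifOn (a b : ℝ) : Measure ℝ :=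
  (ENNReal.ofReal (b - a))⁻¹ • volume.restrict (Set.Icc a b)

/-- Bernoulli distribution with parameter p, as a measure on ℝ. -/
def bern (p : ℝ) : Measure ℝ :=
  ENNReal.ofReal (1 - p) • Measure.dirac (0 : ℝ) + ENNReal.ofReal p • Measure.dirac (1 : ℝ)

/-- The set C(𝐅) of finite-mean distributions dominated by the comonotonic sum in convex order. -/
def CSet (n : ℕ) (F : Fin n → Measure ℝ) : Set (Measure ℝ) :=
  {G | IsProbabilityMeasure G ∧ Integrable id G ∧ ConvexOrder G (comonoSum n F)}

/-! The Pareto quantile function `u ↦ θ (1 - u) ^ (-1/α)` is linear in the scale `θ`, so on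
`(0,1)` the quantile mixture `∑ⱼ Λᵢⱼ P_{α,θⱼ}⁻¹` is exactly the quantile function of
`P_{α,(Λθ)ᵢ}`. Pushing the uniform law forward by a map that is a Galois inverse of a CDF
recovers that distribution. -/

open Set Filter Topology

instance isProbabilityMeasure_uniform01 : IsProbabilityMeasure uniform01 :=
  ⟨by simp [uniform01]⟩

lemma quantile_eq_of_le_iff {μ : Measure ℝ} {u y : ℝ}
    (h : ∀ x, y ≤ x ↔ u ≤ (μ (Iic x)).toReal) : quantile μ u = y := by
  have hset : {x | u ≤ (μ (Iic x)).toReal} = Ici y := Set.ext fun x => (h x).symm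
  rw [quantile, hset, csInf_Ici]

lemma map_uniform01_eq_of_le_iff {μ : Measure ℝ} [IsProbabilityMeasure μ] {g : ℝ → ℝ}
    (hg : Measurable g) (h : ∀ x, ∀ u ∈ Ioo (0 : ℝ) 1, g u ≤ x ↔ u ≤ (μ (Iic x)).toReal) :
    uniform01.map g = μ := by
  have := Measure.isProbabilityMeasure_map (μ := uniform01) hg.aemeasurable
  refine Measure.ext_of_Iic _ _ fun x => ?_
  set p := (μ (Iic x)).toReal
  have hpre : g ⁻¹' Iic x ∩ Ioo 0 1 = Ioo 0 1 ∩ Iic p := by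
    ext u
    simp only [mem_inter_iff, mem_preimage, mem_Iic]
    exact ⟨fun ⟨hx, hu⟩ => ⟨hu, (h x u hu).1 hx⟩, fun ⟨hu, hp⟩ => ⟨(h x u hu).2 hp, hu⟩⟩
  have hp1 : p ≤ 1 := ENNReal.toReal_le_of_le_ofReal zero_le_one (by simp [prob_le_one])
  rw [Measure.map_apply hg measurableSet_Iic, uniform01,
    Measure.restrict_apply (hg measurableSet_Iic), hpre,
    measure_congr ((Ioo_ae_eq_Ioc (μ := volume)).inter (ae_eq_refl (Iic p))), Ioc_inter_Iic,
    min_eq_right hp1,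
    Real.volume_Ioc, sub_zero, ENNReal.ofReal_toReal (measure_ne_top μ _)]

lemma pareto_Iic_of_lt (α : ℝ) {c x : ℝ} (hx : x < c) : pareto α c (Iic x) = 0 := by
  rw [pareto, withDensity_apply _ measurableSet_Iic,
    setLIntegral_congr_fun measurableSet_Iic fun t (ht : t ≤ x) => if_neg (by linarith),
    lintegral_zero]

lemma integral_pareto_density {α c x : ℝ} (hα : 0 < α) (hc : 0 < c) (hx : c ≤ x) :
    ∫ t in c..x, α * c ^ α / t ^ (α + 1) = 1 - (c / x) ^ α := by
  have hx0 : 0 < x := hc.trans_le hx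
  have hpow : ∀ t ∈ uIcc c x, α * c ^ α / t ^ (α + 1) = α * c ^ α * t ^ (-(α + 1)) := by
    intro t ht
    rw [uIcc_of_le hx] at ht
    rw [Real.rpow_neg (hc.trans_le ht.1).le, div_eq_mul_inv]
  have h0 : (0 : ℝ) ∉ uIcc c x := by
    rw [uIcc_of_le hx]; exact fun h => hc.not_ge h.1
  rw [intervalIntegral.integral_congr hpow, intervalIntegral.integral_const_mul,
    integral_rpow (Or.inr ⟨by linarith, h0⟩), show -(α + 1) + 1 = -α by ring,
    Real.div_rpow hc.le hx0.le, Real.rpow_neg hx0.le, Real.rpow_neg hc.le]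
  have : 0 < c ^ α := Real.rpow_pos_of_pos hc α
  have : 0 < x ^ α := Real.rpow_pos_of_pos hx0 α
  field_simp
  ring

lemma pareto_Iic {α c x : ℝ} (hα : 0 < α) (hc : 0 < c) (hx : c ≤ x) :
    pareto α c (Iic x) = ENNReal.ofReal (1 - (c / x) ^ α) := by
  have hdens : ∀ t, (if c ≤ t then ENNReal.ofReal (α * c ^ α / t ^ (α + 1)) else 0) =
      (Ici c).indicator (fun t => ENNReal.ofReal (α * c ^ α / t ^ (α + 1))) t := fun t => rfl
  have hcont : ContinuousOn (fun t : ℝ => α * c ^ α / t ^ (α + 1)) (Icc c x) :=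
    continuousOn_const.div
      (continuousOn_id.rpow_const fun t ht => Or.inl (hc.trans_le ht.1).ne')
      fun t ht => (Real.rpow_pos_of_pos (hc.trans_le ht.1) _).ne'
  have hnonneg : 0 ≤ᵐ[volume.restrict (Icc c x)] fun t : ℝ => α * c ^ α / t ^ (α + 1) := by
    filter_upwards [ae_restrict_mem measurableSet_Icc] with t ht
    have : 0 < t := hc.trans_le ht.1
    positivity
  rw [pareto, withDensity_apply _ measurableSet_Iic]
  simp_rw [hdens]
  rw [lintegral_indicator measurableSet_Ici, Measure.restrict_restrict measurableSet_Ici,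
    Ici_inter_Iic, ← ofReal_integral_eq_lintegral_ofReal hcont.integrableOn_Icc hnonneg,
    integral_Icc_eq_integral_Ioc, ← intervalIntegral.integral_of_le hx,
    integral_pareto_density hα hc hx]

lemma rpow_div_le_one {α c x : ℝ} (hα : 0 < α) (hc : 0 < c) (hx : c ≤ x) :
    (c / x) ^ α ≤ 1 :=
  have hx0 : 0 < x := hc.trans_le hx
  Real.rpow_le_one (div_nonneg hc.le hx0.le) ((div_le_one hx0).2 hx) hα.le

lemma isProbabilityMeasure_pareto {α c : ℝ} (hα : 0 < α) (hc : 0 < c) :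
    IsProbabilityMeasure (pareto α c) := by
  constructor
  have hlim : Tendsto (fun x : ℝ => ENNReal.ofReal (1 - (c / x) ^ α)) atTop (𝓝 1) := by
    have : Tendsto (fun x : ℝ => (c / x) ^ α) atTop (𝓝 0) := by
      simpa [Real.zero_rpow hα.ne'] using
        (tendsto_const_nhds.div_atTop tendsto_id).rpow_const (Or.inr hα.le) (p := α)
    simpa using ENNReal.tendsto_ofReal ((tendsto_const_nhds (x := (1 : ℝ))).sub this)
  refine tendsto_nhds_unique (tendsto_measure_Iic_atTop _) (hlim.congr' ?_)
  filter_upwards [eventually_ge_atTop c] with x hx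
  exact (pareto_Iic hα hc hx).symm

def paretoQuantile (α c u : ℝ) : ℝ := c * (1 - u) ^ (-α⁻¹)

lemma lt_paretoQuantile {α c u : ℝ} (hα : 0 < α) (hc : 0 < c) (hu : u ∈ Ioo (0 : ℝ) 1) :
    c < paretoQuantile α c u :=
  lt_mul_of_one_lt_right hc <| Real.one_lt_rpow_of_pos_of_lt_one_of_neg (by linarith [hu.2])
    (by linarith [hu.1]) (neg_neg_of_pos (inv_pos.2 hα))

lemma paretoQuantile_le_iff {α c u : ℝ} (hα : 0 < α) (hc : 0 < c) (hu : u ∈ Ioo (0 : ℝ) 1)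
    (x : ℝ) : paretoQuantile α c u ≤ x ↔ u ≤ (pareto α c (Iic x)).toReal := by
  rcases lt_or_ge x c with hxc | hcx
  · rw [pareto_Iic_of_lt α hxc, ENNReal.toReal_zero]
    exact iff_of_false (lt_paretoQuantile hα hc hu |>.trans' hxc).not_ge hu.1.not_ge
  have hx : 0 < x := hc.trans_le hcx
  have hv : 0 < 1 - u := by linarith [hu.2]
  rw [pareto_Iic hα hc hcx, ENNReal.toReal_ofReal (by linarith [rpow_div_le_one hα hc hcx]),
    paretoQuantile, Real.rpow_neg hv.le, mul_inv_le_iff₀ (by positivity), mul_comm,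
    ← div_le_iff₀ hx, Real.le_rpow_inv_iff_of_pos (by positivity) hv.le hα]
  exact le_sub_comm

lemma quantile_pareto {α c u : ℝ} (hα : 0 < α) (hc : 0 < c) (hu : u ∈ Ioo (0 : ℝ) 1) :
    quantile (pareto α c) u = paretoQuantile α c u :=
  quantile_eq_of_le_iff (paretoQuantile_le_iff hα hc hu)

lemma map_uniform01_paretoQuantile {α c : ℝ} (hα : 0 < α) (hc : 0 < c) :
    uniform01.map (paretoQuantile α c) = pareto α c :=
  have := isProbabilityMeasure_pareto hα hc
  map_uniform01_eq_of_le_iff (by unfold paretoQuantile; fun_prop)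
    fun x _ hu => paretoQuantile_le_iff hα hc hu x

lemma sum_mul_paretoQuantile {ι : Type*} (s : Finset ι) (a θ : ι → ℝ) (α u : ℝ) :
    ∑ j ∈ s, a j * paretoQuantile α (θ j) u = paretoQuantile α (∑ j ∈ s, a j * θ j) u := by
  simp only [paretoQuantile, Finset.sum_mul, mul_assoc]

/-- Proposition 5.1(i): a quantile mixture of Pareto distributions with the same
    shape α is Pareto with mixed scale. -/
theorem stmt14 (n : ℕ) (α : ℝ) (hα : 0 < α)
    (θ : Fin n → ℝ) (hθ : ∀ i, 0 < θ i)
    (Λ : Matrix (Fin n) (Fin n) ℝ) (hΛ : ∀ i j, 0 < Λ i j) (i : Fin n) :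
    quantileMix Λ (fun j => pareto α (θ j)) i = pareto α (∑ j, Λ i j * θ j) := by
  have hscale : 0 < ∑ j, Λ i j * θ j :=
    Finset.sum_pos (fun j _ => mul_pos (hΛ i j) (hθ j)) ⟨i, Finset.mem_univ i⟩
  have hquantiles : (fun u => ∑ j, Λ i j * quantile (pareto α (θ j)) u)
      =ᵐ[uniform01] paretoQuantile α (∑ j, Λ i j * θ j) := by
    filter_upwards [ae_restrict_mem measurableSet_Ioo] with u hu
    simp only [quantile_pareto hα (hθ _) hu, sum_mul_paretoQuantile]
  rw [quantileMix, Measure.map_congr hquantiles, map_uniform01_paretoQuantile hα hscale]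
end
end

section
/- Let (X₁,…,Xₙ) be an exchangeable random vector whose common marginal distribution F has finite first moment, let ρ be a risk measure consistent with convex order defined on finite-mean Borel probability measures on ℝ, and let 𝛄 = (γ₁,…,γₙ) and 𝛌 = (λ₁,…,λₙ) be vectors of nonnegative reals summing to 1 with 𝛄 ≺ 𝛌 (majorization). Then ρ(law of ∑ᵢγᵢXᵢ) ≤ ρ(law of ∑ᵢλᵢXᵢ). -/
/-! By Birkhoff's theorem the doubly stochastic matrix is a convex combination of permutation
matrices, so `∑ γᵢ Xᵢ` is a convex combination of the sums `∑ λ_{σ i} Xᵢ`, each of which has the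
law of `∑ λᵢ Xᵢ` by exchangeability. Jensen's inequality, applied pointwise and integrated, then
gives the convex order between the two laws. -/


open MeasureTheory
open scoped ENNReal BigOperators

noncomputable section

open Matrix ProbabilityTheory

theorem DoublyStochastic.exists_mulVec_eq_sum_perm {n : ℕ} {Λ : Matrix (Fin n) (Fin n) ℝ}
    (hΛ : DoublyStochastic Λ) (l : Fin n → ℝ) :
    ∃ w : Equiv.Perm (Fin n) → ℝ, (∀ σ, 0 ≤ w σ) ∧ ∑ σ, w σ = 1 ∧
      Λ *ᵥ l = ∑ σ, w σ • (l ∘ σ) := by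
  obtain ⟨w, hw0, hw1, hwΛ⟩ :=
    exists_eq_sum_perm_of_mem_doublyStochastic (mem_doublyStochastic_iff_sum.2 hΛ)
  refine ⟨w, hw0, hw1, ?_⟩
  simp only [← hwΛ, Matrix.sum_mulVec, Matrix.smul_mulVec, Matrix.permMatrix_mulVec]

section

variable {ι Ω : Type*} [Fintype ι] [MeasurableSpace Ω] {P : Measure Ω} {X : ι → Ω → ℝ}

theorem identDistrib_sum_perm_mul (hX : ∀ i, Measurable (X i))
    (hexch : ∀ π : Equiv.Perm ι,
      P.map (fun ω => fun i => X (π i) ω) = P.map (fun ω => fun i => X i ω))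
    (l : ι → ℝ) (σ : Equiv.Perm ι) :
    IdentDistrib (fun ω => ∑ i, l (σ i) * X i ω) (fun ω => ∑ i, l i * X i ω) P P := by
  have hvec : IdentDistrib (fun ω i => X (σ⁻¹ i) ω) (fun ω i => X i ω) P P :=
    ⟨(measurable_pi_lambda _ fun i => hX _).aemeasurable,
      (measurable_pi_lambda _ fun i => hX i).aemeasurable, hexch σ⁻¹⟩
  have hlin : Measurable fun x : ι → ℝ => ∑ i, l i * x i := by fun_prop
  convert hvec.comp hlin using 1
  · funext ω
    rw [Function.comp_apply, ← Equiv.sum_comp σ fun i => l i * X (σ⁻¹ i) ω]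
    simp only [Equiv.Perm.inv_def, Equiv.symm_apply_apply]
  · rfl

theorem integrable_id_map_sum_mul (hX : ∀ i, Integrable (X i) P) (c : ι → ℝ) :
    Integrable id (P.map fun ω => ∑ i, c i * X i ω) := by
  have hS : Integrable (fun ω => ∑ i, c i * X i ω) P :=
    integrable_finsetSum _ fun i _ => (hX i).const_mul _
  rwa [integrable_map_measure aestronglyMeasurable_id hS.aemeasurable]

end

theorem convexOrder_map_sum_mul_of_identDistrib {ι Ω : Type*} [Fintype ι] [MeasurableSpace Ω]
    {P : Measure Ω} {Y : ι → Ω → ℝ} {S : Ω → ℝ} (hS : AEMeasurable S P)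
    (hY : ∀ i, IdentDistrib (Y i) S P P) {w : ι → ℝ} (hw0 : ∀ i, 0 ≤ w i)
    (hw1 : ∑ i, w i = 1) :
    ConvexOrder (P.map fun ω => ∑ i, w i * Y i ω) (P.map S) := by
  intro φ hφ hφT hφS
  have hφc : Continuous φ := continuousOn_univ.mp (hφ.continuousOn isOpen_univ)
  have hT : AEMeasurable (fun ω => ∑ i, w i * Y i ω) P :=
    Finset.aemeasurable_fun_sum _ fun i _ => (hY i).aemeasurable_fst.const_mul _
  rw [integrable_map_measure hφc.aestronglyMeasurable hT] at hφT
  rw [integrable_map_measure hφc.aestronglyMeasurable hS] at hφS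
  rw [integral_map hT hφc.aestronglyMeasurable, integral_map hS hφc.aestronglyMeasurable]
  have hφY : ∀ i, IdentDistrib (fun ω => φ (Y i ω)) (fun ω => φ (S ω)) P P :=
    fun i => (hY i).comp hφc.measurable
  have hint : ∀ i, Integrable (fun ω => w i * φ (Y i ω)) P :=
    fun i => ((hφY i).integrable_iff.2 hφS).const_mul _
  have jensen : ∀ ω, φ (∑ i, w i * Y i ω) ≤ ∑ i, w i * φ (Y i ω) := fun ω =>
    hφ.map_sum_le (fun i _ => hw0 i) hw1 fun i _ => Set.mem_univ _
  calc ∫ ω, φ (∑ i, w i * Y i ω) ∂P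
      ≤ ∫ ω, ∑ i, w i * φ (Y i ω) ∂P :=
        integral_mono hφT (integrable_finsetSum _ fun i _ => hint i) jensen
    _ = ∑ i, w i * ∫ ω, φ (S ω) ∂P := by
        rw [integral_finsetSum _ fun i _ => hint i]
        simp only [integral_const_mul, (hφY _).integral_eq]
    _ = ∫ ω, φ (S ω) ∂P := by rw [← Finset.sum_mul, hw1, one_mul]

theorem stmt16_general (n : ℕ) {Ω : Type} [MeasurableSpace Ω]
    (P : Measure Ω) [IsProbabilityMeasure P]
    (X : Fin n → Ω → ℝ) (hX : ∀ i, Measurable (X i))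
    (hexch : ∀ π : Equiv.Perm (Fin n),
      P.map (fun ω => fun i => X (π i) ω) = P.map (fun ω => fun i => X i ω))
    (F : Measure ℝ) (hmarg : ∀ i, P.map (X i) = F) (hFint : Integrable id F)
    (ρ : Measure ℝ → ℝ) (hρ : CxConsistentRisk ρ)
    (g l : Fin n → ℝ)
    (hmaj : ∃ Λ : Matrix (Fin n) (Fin n) ℝ,
      DoublyStochastic Λ ∧ ∀ i, g i = ∑ j, Λ i j * l j) :
    ρ (P.map (fun ω => ∑ i, g i * X i ω)) ≤ ρ (P.map (fun ω => ∑ i, l i * X i ω)) := by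
  obtain ⟨Λ, hΛ, hgΛ⟩ := hmaj
  obtain ⟨w, hw0, hw1, hΛl⟩ := DoublyStochastic.exists_mulVec_eq_sum_perm hΛ l
  have hg : ∀ i, g i = ∑ σ, w σ * l (σ i) := fun i => by
    simpa [Finset.sum_apply] using (hgΛ i).trans (congrFun hΛl i)
  have hmix : (fun ω => ∑ i, g i * X i ω) = fun ω => ∑ σ, w σ * ∑ i, l (σ i) * X i ω := by
    funext ω
    simp only [hg, Finset.sum_mul, Finset.mul_sum, mul_assoc]
    exact Finset.sum_comm
  have hXint : ∀ i, Integrable (X i) P := fun i => by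
    rwa [← hmarg i, integrable_map_measure aestronglyMeasurable_id (hX i).aemeasurable] at hFint
  have hS : Measurable fun ω => ∑ i, l i * X i ω := by fun_prop
  refine hρ _ _ (Measure.isProbabilityMeasure_map (by fun_prop))
    (Measure.isProbabilityMeasure_map hS.aemeasurable) (integrable_id_map_sum_mul hXint g)
    (integrable_id_map_sum_mul hXint l) ?_
  rw [hmix]
  exact convexOrder_map_sum_mul_of_identDistrib hS.aemeasurable
    (identDistrib_sum_perm_mul hX hexch l) hw0 hw1

/-- Proposition 7.1(i): for an exchangeable vector and a convex-order consistent
    risk measure, a more diversified portfolio has smaller risk. -/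
theorem stmt16 (n : ℕ) {Ω : Type} [MeasurableSpace Ω]
    (P : Measure Ω) [IsProbabilityMeasure P]
    (X : Fin n → Ω → ℝ) (hX : ∀ i, Measurable (X i))
    (hexch : ∀ π : Equiv.Perm (Fin n),
      P.map (fun ω => fun i => X (π i) ω) = P.map (fun ω => fun i => X i ω))
    (F : Measure ℝ) (hmarg : ∀ i, P.map (X i) = F) (hFint : Integrable id F)
    (ρ : Measure ℝ → ℝ) (hρ : CxConsistentRisk ρ)
    (g l : Fin n → ℝ) (hg : ∀ i, 0 ≤ g i) (hl : ∀ i, 0 ≤ l i)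
    (hgs : ∑ i, g i = 1) (hls : ∑ i, l i = 1)
    (hmaj : ∃ Λ : Matrix (Fin n) (Fin n) ℝ,
      DoublyStochastic Λ ∧ ∀ i, g i = ∑ j, Λ i j * l j) :
    ρ (P.map (fun ω => ∑ i, g i * X i ω)) ≤ ρ (P.map (fun ω => ∑ i, l i * X i ω)) :=
  stmt16_general n P X hX hexch F hmarg hFint ρ hρ g l hmaj

end
end
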